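/- Let (X,f) be a topological dynamical system. If (X,f) is multi-transitive, then (X,f) is strongly scattering, i.e., weakly disjoint from every E-system. -/

import Mathlib

open Function Set Filter Topology MeasureTheory

/-- A topological dynamical system `f : X → X` is (topologically) transitive if for every
two non-empty open subsets `U`, `V` there exists `n ≥ 1` with `f^[n] '' U ∩ V ≠ ∅`. -/
def IsTopTransitive {X : Type*} [TopologicalSpace X] (f : X → X) : Prop :=
  ∀ U V : Set X, IsOpen U → IsOpen V → U.Nonempty → V.Nonempty →
    ∃ n : ℕ, 1 ≤ n ∧ (f^[n] '' U ∩ V).Nonempty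

/-- Multi-transitivity with respect to a vector `a = (a₁, …, a_r)`: the product system
`(X^r, f^{a₁} × ⋯ × f^{a_r})` is transitive. -/
def MultiTransWrt {X : Type*} [TopologicalSpace X] (f : X → X) {r : ℕ} (a : Fin r → ℕ) : Prop :=
  IsTopTransitive (fun x : Fin r → X => fun i => f^[a i] (x i))

/-- `(X, f)` is multi-transitive if it is multi-transitive with respect to `(1, 2, …, n)`
for every `n ≥ 1`. -/
def MultiTrans {X : Type*} [TopologicalSpace X] (f : X → X) : Prop :=
  ∀ n : ℕ, 1 ≤ n → MultiTransWrt f (fun i : Fin n => (i : ℕ) + 1)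

/-- `(X, f)` is strongly multi-transitive if it is multi-transitive with respect to every
vector of positive integers. -/
def StrongMultiTrans {X : Type*} [TopologicalSpace X] (f : X → X) : Prop :=
  ∀ r : ℕ, 1 ≤ r → ∀ a : Fin r → ℕ, (∀ i, 1 ≤ a i) → MultiTransWrt f a

/-- The hitting time set `N(U, V) = {n ≥ 1 : f^[n] '' U ∩ V ≠ ∅}`. -/
def HittingTimes {X : Type*} [TopologicalSpace X] (f : X → X) (U V : Set X) : Set ℕ :=
  {n : ℕ | 1 ≤ n ∧ (f^[n] '' U ∩ V).Nonempty}

/-!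
Given non-empty open `U, V ⊆ X` and `W₁, W₂ ⊆ Y`, transitivity of `g` gives `k` with
`W = W₁ ∩ g⁻ᵏ W₂ ≠ ∅`, so `μ W > 0`. Pigeonholing the translates of `W` under the invariant
probability measure gives `R` such that, for every `n ≥ 1`, `W` returns to itself at some time
`n * m` with `0 < m < R`. Multi-transitivity with respect to `(1, …, R)` provides a single `n`
for which all of `n, 2n, …, Rn` are hitting times from `U` to `f⁻ᵏ V` (non-empty, because a
transitive self-map of a compact space is onto). Adding `k` to the common time `n * m` gives a
common hitting time of `U → V` and `W₁ → W₂`.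
-/

section HittingTimes

variable {X : Type*} [TopologicalSpace X] {f : X → X}

theorem hittingTimes_mono {U U' V V' : Set X} (hU : U ⊆ U') (hV : V ⊆ V') :
    HittingTimes f U V ⊆ HittingTimes f U' V' :=
  fun _ ⟨hn, hne⟩ => ⟨hn, hne.mono (inter_subset_inter (image_mono hU) hV)⟩

theorem add_mem_hittingTimes {U V : Set X} {a k : ℕ}
    (h : a ∈ HittingTimes f U (f^[k] ⁻¹' V)) : a + k ∈ HittingTimes f U V := by
  obtain ⟨ha, _, ⟨x, hx, rfl⟩, hxV⟩ := h
  refine ⟨by omega, _, ⟨x, hx, rfl⟩, ?_⟩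
  rwa [Nat.add_comm, iterate_add_apply]

theorem isTopTransitive_prodMap_of_hittingTimes {Y : Type*} [TopologicalSpace Y] {g : Y → Y}
    (h : ∀ (U V : Set X) (W₁ W₂ : Set Y), IsOpen U → IsOpen V → IsOpen W₁ → IsOpen W₂ →
      U.Nonempty → V.Nonempty → W₁.Nonempty → W₂.Nonempty →
      (HittingTimes f U V ∩ HittingTimes g W₁ W₂).Nonempty) :
    IsTopTransitive (fun p : X × Y => (f p.1, g p.2)) := by
  rintro S T hS hT ⟨⟨x, y⟩, hxy⟩ ⟨⟨x', y'⟩, hxy'⟩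
  obtain ⟨U, W₁, hU, hW₁, hx, hy, hUW₁⟩ := isOpen_prod_iff.1 hS x y hxy
  obtain ⟨V, W₂, hV, hW₂, hx', hy', hVW₂⟩ := isOpen_prod_iff.1 hT x' y' hxy'
  obtain ⟨n, ⟨hn, _, ⟨u, hu, rfl⟩, huV⟩, -, _, ⟨w, hw, rfl⟩, hwW₂⟩ :=
    h U V W₁ W₂ hU hV hW₁ hW₂ ⟨x, hx⟩ ⟨x', hx'⟩ ⟨y, hy⟩ ⟨y', hy'⟩
  refine ⟨n, hn, _, ⟨(u, w), hUW₁ ⟨hu, hw⟩, rfl⟩, ?_⟩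
  change (Prod.map f g)^[n] (u, w) ∈ T
  rw [Prod.map_iterate]
  exact hVW₂ ⟨huV, hwW₂⟩

end HittingTimes

theorem IsTopTransitive.surjective {X : Type*} [TopologicalSpace X] [CompactSpace X] [T2Space X]
    {f : X → X} (hf : Continuous f) (ht : IsTopTransitive f) : Surjective f := by
  have hdense : Dense (range f) := by
    refine dense_iff_inter_open.2 fun V hV ⟨y, hy⟩ => ?_
    obtain ⟨n, hn, _, ⟨x, -, rfl⟩, hxV⟩ := ht univ V isOpen_univ hV ⟨y, trivial⟩ ⟨y, hy⟩
    refine ⟨_, hxV, f^[n - 1] x, ?_⟩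
    rw [← iterate_succ_apply' f, Nat.succ_eq_add_one, Nat.sub_add_cancel hn]
  rw [← range_eq_univ, ← (isCompact_range hf).isClosed.closure_eq, hdense.closure_eq]

namespace MultiTrans

variable {X : Type*} [TopologicalSpace X] {f : X → X}

theorem exists_forall_mul_mem_hittingTimes (hmt : MultiTrans f) {U V : Set X}
    (hU : IsOpen U) (hV : IsOpen V) (hU' : U.Nonempty) (hV' : V.Nonempty) (R : ℕ) :
    ∃ n ≥ 1, ∀ t ∈ Finset.Icc 1 R, n * t ∈ HittingTimes f U V := by
  obtain ⟨n, hn, _, ⟨x, hx, rfl⟩, hxV⟩ :=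
    hmt (R + 1) (Nat.le_add_left 1 R) (univ.pi fun _ => U) (univ.pi fun _ => V)
      (isOpen_set_pi finite_univ fun _ _ => hU) (isOpen_set_pi finite_univ fun _ _ => hV)
      (univ_pi_nonempty_iff.2 fun _ => hU') (univ_pi_nonempty_iff.2 fun _ => hV')
  refine ⟨n, hn, fun t ht => ?_⟩
  obtain ⟨ht1, htR⟩ := Finset.mem_Icc.1 ht
  let i : Fin (R + 1) := ⟨t - 1, by omega⟩
  have hit : (i : ℕ) + 1 = t := Nat.sub_add_cancel ht1
  refine ⟨Nat.one_le_iff_ne_zero.2 (by positivity), _, ⟨x i, hx i trivial, rfl⟩, ?_⟩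
  have := hxV i trivial
  change (Pi.map fun i : Fin (R + 1) => f^[(i : ℕ) + 1])^[n] x i ∈ V at this
  rwa [Pi.map_iterate, Pi.map_apply, ← iterate_mul, hit, Nat.mul_comm] at this

theorem isTopTransitive (hmt : MultiTrans f) : IsTopTransitive f := fun _ _ hU hV hU' hV' =>
  let ⟨n, _, hn⟩ := hmt.exists_forall_mul_mem_hittingTimes hU hV hU' hV' 1
  ⟨n * 1, hn 1 (Finset.mem_Icc.2 ⟨le_rfl, le_rfl⟩)⟩

end MultiTrans

theorem MeasureTheory.MeasurePreserving.exists_forall_exists_mul_mem_hittingTimes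
    {Y : Type*} [TopologicalSpace Y] [MeasurableSpace Y] {μ : Measure Y} [IsFiniteMeasure μ]
    {g : Y → Y} (hg : MeasurePreserving g μ μ) {W : Set Y} (hW : NullMeasurableSet W μ)
    (hW0 : μ W ≠ 0) :
    ∃ R : ℕ, ∀ n ≥ 1, ∃ m ∈ Ioo 0 R, n * m ∈ HittingTimes g W W := by
  obtain ⟨R, hR⟩ := ENNReal.exists_nat_mul_gt hW0 (measure_ne_top μ univ)
  refine ⟨R, fun n hn => ?_⟩
  obtain ⟨y, hy, m, hm, hmy⟩ :=
    (hg.iterate n).exists_mem_iterate_mem_of_measure_univ_lt_mul_measure hW hR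
  rw [← iterate_mul] at hmy
  exact ⟨m, hm, Nat.one_le_iff_ne_zero.2 (Nat.mul_ne_zero (by omega) hm.1.ne'),
    _, ⟨y, hy, rfl⟩, hmy⟩

theorem multiTrans_stronglyScattering
    {X : Type*} [MetricSpace X] [CompactSpace X] (f : X → X) (hf : Continuous f)
    (hmt : MultiTrans f) :
    ∀ (Y : Type*) [MetricSpace Y] [CompactSpace Y] [MeasurableSpace Y] [BorelSpace Y]
      (g : Y → Y), Continuous g → IsTopTransitive g →
      (∃ μ : Measure Y, IsProbabilityMeasure μ ∧
        (∀ s : Set Y, MeasurableSet s → μ (g ⁻¹' s) = μ s) ∧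
        (∀ W : Set Y, IsOpen W → W.Nonempty → 0 < μ W)) →
      IsTopTransitive (fun p : X × Y => (f p.1, g p.2)) := by
  intro Y _ _ _ _ g hg hgt ⟨μ, _, hinv, hfull⟩
  have hgμ : MeasurePreserving g μ μ :=
    ⟨hg.measurable, Measure.ext fun s hs => by rw [Measure.map_apply hg.measurable hs, hinv s hs]⟩
  have hfs : Surjective f := hmt.isTopTransitive.surjective hf
  refine isTopTransitive_prodMap_of_hittingTimes
    fun U V W₁ W₂ hU hV hW₁ hW₂ hU' hV' hW₁' hW₂' => ?_
  obtain ⟨k, -, _, ⟨w, hw, rfl⟩, hwW₂⟩ := hgt W₁ W₂ hW₁ hW₂ hW₁' hW₂'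
  set W := W₁ ∩ g^[k] ⁻¹' W₂
  have hW : IsOpen W := hW₁.inter (hW₂.preimage (hg.iterate k))
  obtain ⟨R, hR⟩ := hgμ.exists_forall_exists_mul_mem_hittingTimes hW.measurableSet.nullMeasurableSet
    (hfull W hW ⟨w, hw, hwW₂⟩).ne'
  obtain ⟨n, hn, hnU⟩ := hmt.exists_forall_mul_mem_hittingTimes hU
    (hV.preimage (hf.iterate k)) hU' ((hfs.iterate k).nonempty_preimage.2 hV') R
  obtain ⟨m, hm, hmW⟩ := hR n hn
  exact ⟨n * m + k, add_mem_hittingTimes (hnU m (Finset.mem_Icc.2 ⟨hm.1, hm.2.le⟩)),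
    add_mem_hittingTimes (hittingTimes_mono inter_subset_left inter_subset_right hmW)⟩
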